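/- arXiv:2309.12921 — 5 statements merged into one kernel-verified Lean document; each statement's English description precedes it below -/
import Mathlib

section
/- Let X and Y be roughly geodesic Gromov hyperbolic metric spaces, let f : X → Y be an (L,c)-quasi-isometry, and fix a basepoint o ∈ X. Then there exist constants L' > 0 and C' ≥ 0 such that for all x, y ∈ X: (1/L')·(x,y)_o − C' ≤ (f(x),f(y))_{f(o)} ≤ L'·(x,y)_o + C'. -/
open Set

/-- The Gromov product `(x,y)_o` in a metric space. -/
noncomputable def gromovProd {X : Type*} [MetricSpace X] (o x y : X) : ℝ :=
  (dist o x + dist o y - dist x y) / 2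

/-- `X` is `δ`-hyperbolic. -/
def HyperbolicWith (X : Type*) [MetricSpace X] (δ : ℝ) : Prop :=
  ∀ w x y z : X, min (gromovProd w x y) (gromovProd w y z) - δ ≤ gromovProd w x z

/-- `X` is `C`-roughly geodesic. -/
def RoughlyGeodesicWith (X : Type*) [MetricSpace X] (C : ℝ) : Prop :=
  ∀ x y : X, ∃ a b : ℝ, a ≤ b ∧ ∃ γ : ℝ → X, γ a = x ∧ γ b = y ∧
    ∀ s ∈ Icc a b, ∀ t ∈ Icc a b, abs (dist (γ s) (γ t) - |s - t|) ≤ C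

/-
A hyperbolic space loses at most `k δ` of Gromov product along a chain of `2 ^ k` points.
Applied to the `f`-image of a unit subdivision of a rough geodesic from `x` to `y`, all of whose
points are at distance at least about `(x, y)_o` from `o`, this gives
`(f x, f y)_{f o} ≥ (x, y)_o / L - O(log d(x, y))`. The logarithm is absorbed when `d(x, y)` is linear in `(x, y)_o`; in general one cuts the rough
geodesics from `o` to `x` and `y` at parameter `(x, y)_o`, which leaves a short middle pair and
two pairs lying on a rough geodesic from `o`, handled by induction. The upper bound is the lower
bound for a coarse inverse of `f`.
-/

section

variable {X Y : Type*} [MetricSpace X] [MetricSpace Y]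

lemma gromovProd_comm (o x y : X) : gromovProd o x y = gromovProd o y x := by
  simp only [gromovProd, dist_comm x y, add_comm (dist o x)]

lemma gromovProd_nonneg (o x y : X) : 0 ≤ gromovProd o x y := by
  have := dist_triangle x o y
  rw [dist_comm x o] at this
  unfold gromovProd; linarith

lemma gromovProd_le_dist_left (o x y : X) : gromovProd o x y ≤ dist o x := by
  have := dist_triangle o x y
  unfold gromovProd; linarith

lemma dist_sub_dist_le_gromovProd (o x y : X) : dist o x - dist x y ≤ gromovProd o x y := by
  have := dist_triangle o y x
  rw [dist_comm y x] at this
  unfold gromovProd; linarith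

lemma gromovProd_le_dist_add_of_dist_add_dist_le {o x y u : X} {E : ℝ}
    (h : dist x u + dist u y ≤ dist x y + E) : gromovProd o x y ≤ dist o u + E / 2 := by
  have := dist_triangle o u x
  have := dist_triangle o u y
  rw [dist_comm x u] at h
  unfold gromovProd; linarith

lemma gromovProd_le_gromovProd_add (w w' x x' y y' : X) :
    gromovProd w x y ≤ gromovProd w' x' y' + (dist w w' + dist x x' + dist y y') := by
  have := dist_triangle4 w w' x' x
  have := dist_triangle4 w w' y' y
  have := dist_triangle4 x' x y y'
  rw [dist_comm x' x] at *
  rw [dist_comm y' y] at *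
  unfold gromovProd; linarith

namespace HyperbolicWith

variable {δ : ℝ}

lemma nonneg (h : HyperbolicWith X δ) (x : X) : 0 ≤ δ := by
  simpa using h x x x x

lemma sub_le_gromovProd (h : HyperbolicWith X δ) {w x y z : X} {a : ℝ}
    (hxy : a ≤ gromovProd w x y) (hyz : a ≤ gromovProd w y z) : a - δ ≤ gromovProd w x z := by
  have := h w x y z
  have := le_min hxy hyz
  linarith

lemma sub_two_mul_le_gromovProd (h : HyperbolicWith X δ) {w x y z u : X} {a : ℝ}
    (hxy : a ≤ gromovProd w x y) (hyz : a ≤ gromovProd w y z) (hzu : a ≤ gromovProd w z u) :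
    a - 2 * δ ≤ gromovProd w x u := by
  have := h.nonneg w
  have := h.sub_le_gromovProd (h.sub_le_gromovProd hxy hyz) (by linarith : a - δ ≤ gromovProd w z u)
  linarith

lemma exists_gromovProd_succ_sub_le (h : HyperbolicWith X δ) (w : X) (k : ℕ) :
    ∀ (u : ℕ → X) (n : ℕ), 1 ≤ n → n ≤ 2 ^ k →
      ∃ i < n, gromovProd w (u i) (u (i + 1)) - k * δ ≤ gromovProd w (u 0) (u n) := by
  induction k with
  | zero =>
    intro u n hn hnk
    obtain rfl : n = 1 := by simp at hnk; omega
    exact ⟨0, one_pos, by simp⟩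
  | succ k ih =>
    intro u n hn hnk
    obtain rfl | hn2 := hn.eq_or_lt
    · have := h.nonneg w
      exact ⟨0, one_pos, by simp; positivity⟩
    obtain ⟨i, hi, hleft⟩ := ih u (n / 2) (by omega) (by rw [pow_succ] at hnk; omega)
    obtain ⟨j, hj, hright⟩ := ih (fun j ↦ u (n / 2 + j)) (n - n / 2) (by omega)
      (by rw [pow_succ] at hnk; omega)
    simp only [add_zero, Nat.add_sub_cancel' (Nat.div_le_self n 2)] at hright
    have hsplit := h w (u 0) (u (n / 2)) (u n)
    push_cast
    rcases min_choice (gromovProd w (u 0) (u (n / 2))) (gromovProd w (u (n / 2)) (u n))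
      with hmin | hmin
    · exact ⟨i, by omega, by linarith⟩
    · exact ⟨n / 2 + j, by omega, by rw [add_assoc]; linarith⟩

end HyperbolicWith

lemma exists_le_two_pow_add_ceil (a b : ℝ) {ε : ℝ} (hε : 0 < ε) :
    ∃ k₀ : ℕ, ∀ s : ℝ, 0 ≤ s → a * s + b ≤ 2 ^ (k₀ + ⌈ε * s⌉₊) := by
  obtain ⟨k₀, hk₀⟩ := pow_unbounded_of_one_lt (max (a / ε) b) (one_lt_two : (1 : ℝ) < 2)
  refine ⟨k₀, fun s hs ↦ ?_⟩
  have hbern : 1 + (⌈ε * s⌉₊ : ℝ) ≤ 2 ^ ⌈ε * s⌉₊ := by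
    simpa [one_add_one_eq_two] using one_add_mul_le_pow (show (-2 : ℝ) ≤ 1 by norm_num) ⌈ε * s⌉₊
  have hceil : ε * s ≤ ⌈ε * s⌉₊ := Nat.le_ceil _
  have ha : a ≤ 2 ^ k₀ * ε := by
    have := (le_max_left _ _).trans hk₀.le
    rwa [div_le_iff₀ hε] at this
  have hb : b ≤ 2 ^ k₀ := (le_max_right _ _).trans hk₀.le
  calc a * s + b ≤ 2 ^ k₀ * (1 + ε * s) := by nlinarith [mul_le_mul_of_nonneg_right ha hs]
    _ ≤ 2 ^ k₀ * 2 ^ ⌈ε * s⌉₊ := by gcongr; linarith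
    _ = 2 ^ (k₀ + ⌈ε * s⌉₊) := (pow_add _ _ _).symm

def IsRoughGeodesic (C ℓ : ℝ) (γ : ℝ → X) : Prop :=
  ∀ s ∈ Icc 0 ℓ, ∀ t ∈ Icc 0 ℓ, abs (dist (γ s) (γ t) - |s - t|) ≤ C

namespace RoughlyGeodesicWith

variable {C : ℝ}

lemma nonneg (h : RoughlyGeodesicWith X C) (x : X) : 0 ≤ C := by
  obtain ⟨a, b, hab, γ, -, -, hγ⟩ := h x x
  simpa using hγ a ⟨le_rfl, hab⟩ a ⟨le_rfl, hab⟩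

lemma exists_isRoughGeodesic (h : RoughlyGeodesicWith X C) (x y : X) :
    ∃ ℓ ≥ 0, ∃ γ : ℝ → X, γ 0 = x ∧ γ ℓ = y ∧ IsRoughGeodesic C ℓ γ := by
  obtain ⟨a, b, hab, γ, hγa, hγb, hγ⟩ := h x y
  refine ⟨b - a, sub_nonneg.2 hab, fun t ↦ γ (a + t), by simpa, by simpa, ?_⟩
  rintro s ⟨hs₀, hs⟩ t ⟨ht₀, ht⟩
  simpa using hγ (a + s) ⟨by linarith, by linarith⟩ (a + t) ⟨by linarith, by linarith⟩

end RoughlyGeodesicWith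

namespace IsRoughGeodesic

variable {C ℓ : ℝ} {γ : ℝ → X} {s t : ℝ}

lemma dist_le (hγ : IsRoughGeodesic C ℓ γ) (hs : 0 ≤ s) (hst : s ≤ t) (ht : t ≤ ℓ) :
    dist (γ s) (γ t) ≤ t - s + C := by
  have := hγ s ⟨hs, hst.trans ht⟩ t ⟨hs.trans hst, ht⟩
  rw [abs_sub_comm s t, abs_of_nonneg (sub_nonneg.2 hst), abs_le] at this
  linarith

lemma le_dist (hγ : IsRoughGeodesic C ℓ γ) (hs : 0 ≤ s) (hst : s ≤ t) (ht : t ≤ ℓ) :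
    t - s - C ≤ dist (γ s) (γ t) := by
  have := hγ s ⟨hs, hst.trans ht⟩ t ⟨hs.trans hst, ht⟩
  rw [abs_sub_comm s t, abs_of_nonneg (sub_nonneg.2 hst), abs_le] at this
  linarith

lemma sub_le_gromovProd (hγ : IsRoughGeodesic C ℓ γ) (hs : 0 ≤ s) (hst : s ≤ t) (ht : t ≤ ℓ) :
    s - 3 * C / 2 ≤ gromovProd (γ 0) (γ s) (γ t) := by
  have := hγ.le_dist le_rfl hs (hst.trans ht)
  have := hγ.le_dist le_rfl (hs.trans hst) ht
  have := hγ.dist_le hs hst ht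
  unfold gromovProd; linarith

lemma gromovProd_le_dist_add (hγ : IsRoughGeodesic C ℓ γ) (o : X) (hs : 0 ≤ s) (hsℓ : s ≤ ℓ) :
    gromovProd o (γ 0) (γ ℓ) ≤ dist o (γ s) + 3 * C / 2 := by
  have := hγ.dist_le le_rfl hs hsℓ
  have := hγ.dist_le hs hsℓ le_rfl
  have := hγ.le_dist le_rfl (hs.trans hsℓ) le_rfl
  have h := gromovProd_le_dist_add_of_dist_add_dist_le (o := o) (E := 3 * C)
    (x := γ 0) (y := γ ℓ) (u := γ s) (by linarith)
  linarith

end IsRoughGeodesic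

def IsQIEmbedding (L c : ℝ) (f : X → Y) : Prop :=
  ∀ x₁ x₂, dist x₁ x₂ / L - c ≤ dist (f x₁) (f x₂) ∧ dist (f x₁) (f x₂) ≤ L * dist x₁ x₂ + c

namespace IsQIEmbedding

variable {δ δX δY C L c D : ℝ} {f : X → Y} {g : Y → X}

lemma nonneg (hf : IsQIEmbedding L c f) (x : X) : 0 ≤ c := by
  simpa using (hf x x).2

lemma dist_le_of_le (hf : IsQIEmbedding L c f) (hL : 0 < L) {x₁ x₂ : X} {r : ℝ}
    (h : dist (f x₁) (f x₂) ≤ r) : dist x₁ x₂ ≤ L * (r + c) := by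
  have := (hf x₁ x₂).1
  rw [div_sub' hL.ne', div_le_iff₀ hL] at this
  nlinarith

lemma dist_comp_le (hf : IsQIEmbedding L c f) (hL : 0 < L)
    (hfg : ∀ y, dist (f (g y)) y ≤ D) (x : X) : dist (g (f x)) x ≤ L * (D + c) :=
  hf.dist_le_of_le hL (hfg (f x))

lemma of_dist_comp_le (hf : IsQIEmbedding L c f) (hL : 0 < L)
    (hfg : ∀ y, dist (f (g y)) y ≤ D) : IsQIEmbedding L ((L + L⁻¹) * (2 * D + c)) g := by
  intro y₁ y₂
  have hc := hf.nonneg (g y₁)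
  have h₁ := hfg y₁
  have h₂ := hfg y₂
  have h₃ := dist_triangle4 (f (g y₁)) y₁ y₂ (f (g y₂))
  have h₄ := dist_triangle4 y₁ (f (g y₁)) (f (g y₂)) y₂
  rw [dist_comm y₂ (f (g y₂))] at h₃
  rw [dist_comm y₁ (f (g y₁))] at h₄
  have hup := hf.dist_le_of_le hL (r := dist y₁ y₂ + 2 * D) (by linarith)
  have hlow := (hf (g y₁) (g y₂)).2
  have hinv : 0 < L⁻¹ := inv_pos.2 hL
  constructor
  · have hLL : (L + L⁻¹) * L = L ^ 2 + 1 := by field_simp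
    rw [sub_le_iff_le_add, div_le_iff₀ hL, add_mul, mul_assoc, mul_comm (2 * D + c), ← mul_assoc,
      hLL]
    nlinarith [sq_nonneg L]
  · nlinarith [mul_nonneg hinv.le (by linarith : (0:ℝ) ≤ 2 * D + c)]

lemma gromovProd_div_sub_le_of_isRoughGeodesic (hf : IsQIEmbedding L c f) (hL : 0 < L)
    (hY : HyperbolicWith Y δ) {ℓ : ℝ} {γ : ℝ → X} (hℓ : 0 ≤ ℓ) (hγ : IsRoughGeodesic C ℓ γ)
    (o : X) {k : ℕ} (hk : ℓ + 2 ≤ 2 ^ k) :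
    gromovProd o (γ 0) (γ ℓ) / L - (3 * C / (2 * L) + L * (1 + C) + 2 * c) - k * δ ≤
      gromovProd (f o) (f (γ 0)) (f (γ ℓ)) := by
  set N := ⌈ℓ⌉₊ + 1 with hNdef
  have hN : (0 : ℝ) < N := by positivity
  have hℓN : ℓ ≤ N := by rw [hNdef]; push_cast; linarith [Nat.le_ceil ℓ]
  have hNk : (N : ℝ) ≤ 2 ^ k := by
    rw [hNdef]; push_cast; linarith [Nat.ceil_lt_add_one hℓ]
  set r : ℕ → ℝ := fun i ↦ i * ℓ / N with hr
  obtain ⟨i, hi, hchain⟩ := hY.exists_gromovProd_succ_sub_le (f o) k (fun i ↦ f (γ (r i))) N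
    (by omega) (by exact_mod_cast hNk)
  have hr₀ : r 0 = 0 := by simp [hr]
  have hrN : r N = ℓ := by simp only [hr]; field_simp
  have hiN : (i : ℝ) + 1 ≤ N := by exact_mod_cast hi
  have hri : 0 ≤ r i := by positivity
  have hrstep : r (i + 1) = r i + ℓ / N := by simp only [hr]; push_cast; ring
  have hrℓ : r (i + 1) ≤ ℓ := by
    simp only [hr]; rw [div_le_iff₀ hN]; push_cast; nlinarith
  have hℓN₁ : ℓ / N ≤ 1 := (div_le_one hN).2 hℓN
  have hstep : dist (f (γ (r i))) (f (γ (r (i + 1)))) ≤ L * (1 + C) + c := by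
    have := hγ.dist_le hri (by rw [hrstep]; linarith [div_nonneg hℓ hN.le]) hrℓ
    have := (hf (γ (r i)) (γ (r (i + 1)))).2
    nlinarith
  have hfar : gromovProd o (γ 0) (γ ℓ) / L - 3 * C / (2 * L) - c ≤ dist (f o) (f (γ (r i))) := by
    have h := hγ.gromovProd_le_dist_add o hri (by linarith [div_nonneg hℓ hN.le])
    have := (hf o (γ (r i))).1
    have : gromovProd o (γ 0) (γ ℓ) / L ≤ (dist o (γ (r i)) + 3 * C / 2) / L := by gcongr
    have : (dist o (γ (r i)) + 3 * C / 2) / L = dist o (γ (r i)) / L + 3 * C / (2 * L) := by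
      field_simp
    linarith
  have := dist_sub_dist_le_gromovProd (f o) (f (γ (r i))) (f (γ (r (i + 1))))
  simp only [hr₀, hrN] at hchain
  linarith

lemma exists_gromovProd_div_sub_le_of_dist_le (hf : IsQIEmbedding L c f) (hL : 0 < L)
    (hX : RoughlyGeodesicWith X C) (hY : HyperbolicWith Y δ) (o : X) (Θ : ℝ) {η : ℝ}
    (hη : 0 < η) :
    ∃ B, ∀ (p q : X) (s : ℝ), 0 ≤ s → dist p q ≤ Θ * (s + 1) →
      gromovProd o p q / L - η * s - B ≤ gromovProd (f o) (f p) (f q) := by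
  have hδ := hY.nonneg (f o)
  set ε := η / (δ + 1) with hε
  have hε₀ : 0 < ε := by positivity
  have hεδ : ε * δ ≤ η := by
    rw [hε, div_mul_eq_mul_div, div_le_iff₀ (by positivity)]; nlinarith
  obtain ⟨k₀, hk₀⟩ := exists_le_two_pow_add_ceil Θ (Θ + C + 2) hε₀
  refine ⟨3 * C / (2 * L) + L * (1 + C) + 2 * c + (k₀ + 1) * δ, fun p q s hs hpq ↦ ?_⟩
  obtain ⟨ℓ, hℓ, γ, rfl, rfl, hγ⟩ := hX.exists_isRoughGeodesic p q
  have hℓpq := hγ.le_dist le_rfl hℓ le_rfl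
  have h := hf.gromovProd_div_sub_le_of_isRoughGeodesic hL hY hℓ hγ o
    (k := k₀ + ⌈ε * s⌉₊) ((by linarith : ℓ + 2 ≤ Θ * s + (Θ + C + 2)).trans (hk₀ s hs))
  have hceil : (⌈ε * s⌉₊ : ℝ) ≤ ε * s + 1 := (Nat.ceil_lt_add_one (by positivity)).le
  have : ((k₀ + ⌈ε * s⌉₊ : ℕ) : ℝ) * δ ≤ (k₀ + 1) * δ + η * s := by
    push_cast; nlinarith [mul_le_mul_of_nonneg_right hceil hδ]
  linarith

/-- Induction on `⌈t - s⌉₊`: split `[s, t]` at `2 s + K`; the first piece is short, and the bound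
for the second one gains `K / (2 L) ≥ δ`, which pays for one use of hyperbolicity. -/
lemma exists_div_sub_le_gromovProd_of_isRoughGeodesic (hf : IsQIEmbedding L c f) (hL : 0 < L)
    (hX : RoughlyGeodesicWith X C) (hY : HyperbolicWith Y δ) (o : X) :
    ∃ B, ∀ (ℓ : ℝ) (γ : ℝ → X), IsRoughGeodesic C ℓ γ → γ 0 = o → ∀ s t, 0 ≤ s → s ≤ t →
      t ≤ ℓ → s / (2 * L) - B ≤ gromovProd (f o) (f (γ s)) (f (γ t)) := by
  have hδ := hY.nonneg (f o)
  have hC := hX.nonneg o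
  set K := 2 * L * δ + 1 with hK
  have hK₁ : 1 ≤ K := by have := mul_nonneg (mul_nonneg zero_le_two hL.le) hδ; linarith
  obtain ⟨B, hB⟩ := hf.exists_gromovProd_div_sub_le_of_dist_le hL hX hY o (K + C + 1)
    (η := 1 / (4 * L)) (by positivity)
  refine ⟨B + 3 * C / (2 * L) + δ, fun ℓ γ hγ hγo ↦ ?_⟩
  subst hγo
  have short : ∀ s t, 0 ≤ s → s ≤ t → t ≤ ℓ → t ≤ 2 * s + K →
      s / (2 * L) - (B + 3 * C / (2 * L) + δ) + δ ≤ gromovProd (f (γ 0)) (f (γ s)) (f (γ t)) := by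
    intro s t hs hst ht htK
    have h₁ := hB (γ s) (γ t) s hs (by
      have := hγ.dist_le hs hst ht
      nlinarith [mul_le_mul_of_nonneg_right (by linarith : 1 ≤ K + C + 1) hs])
    have h₂ : (s - 3 * C / 2) / L ≤ gromovProd (γ 0) (γ s) (γ t) / L := by
      gcongr; exact hγ.sub_le_gromovProd hs hst ht
    have : (s - 3 * C / 2) / L - 1 / (4 * L) * s = s / (2 * L) + s / (4 * L) - 3 * C / (2 * L) := by
      field_simp; ring
    have : 0 ≤ s / (4 * L) := by positivity
    linarith
  suffices ∀ n : ℕ, ∀ s t, 0 ≤ s → s ≤ t → t ≤ ℓ → t - s ≤ n →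
      s / (2 * L) - (B + 3 * C / (2 * L) + δ) ≤ gromovProd (f (γ 0)) (f (γ s)) (f (γ t)) from
    fun s t hs hst ht ↦ this ⌈t - s⌉₊ s t hs hst ht (Nat.le_ceil _)
  intro n
  induction n with
  | zero =>
    intro s t hs hst ht hn
    linarith [short s t hs hst ht (by push_cast at hn; linarith)]
  | succ n ih =>
    intro s t hs hst ht hn
    by_cases htK : t ≤ 2 * s + K
    · linarith [short s t hs hst ht htK]
    push Not at htK
    have h₁ := short s (2 * s + K) hs (by linarith) (htK.le.trans ht) le_rfl
    have h₂ := ih (2 * s + K) t (by linarith) htK.le ht (by push_cast at hn; linarith)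
    have hgain : (2 * s + K) / (2 * L) = s / (2 * L) + δ + (s + 1) / (2 * L) := by
      rw [hK]; field_simp; ring
    have : 0 ≤ (s + 1) / (2 * L) := by positivity
    have := hY.sub_le_gromovProd h₁
      (by linarith : _ ≤ gromovProd (f (γ 0)) (f (γ (2 * s + K))) (f (γ t)))
    linarith

lemma exists_point_div_sub_le_gromovProd (hf : IsQIEmbedding L c f) (hL : 0 < L)
    (hX : RoughlyGeodesicWith X C) (hY : HyperbolicWith Y δ) (o : X) :
    ∃ B, ∀ (z : X) (t : ℝ), 0 ≤ t → t ≤ dist o z → ∃ p : X,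
      t / (2 * L) - B ≤ gromovProd (f o) (f p) (f z) ∧ t - 5 * C / 2 ≤ gromovProd o p z ∧
        dist o p ≤ t + C := by
  obtain ⟨B, hB⟩ := hf.exists_div_sub_le_gromovProd_of_isRoughGeodesic hL hX hY o
  refine ⟨C / (2 * L) + B, fun z t ht hz ↦ ?_⟩
  obtain ⟨ℓ, hℓ, γ, hγo, rfl, hγ⟩ := hX.exists_isRoughGeodesic o z
  have hs₀ : 0 ≤ min t ℓ := le_min ht hℓ
  have hts : t - C ≤ min t ℓ := by
    have := hγ.dist_le le_rfl hℓ le_rfl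
    rw [hγo] at this
    exact le_min (by linarith [hX.nonneg o]) (by linarith)
  refine ⟨γ (min t ℓ), ?_, ?_, ?_⟩
  · have := hB ℓ γ hγ hγo _ ℓ hs₀ (min_le_right _ _) le_rfl
    have : (t - C) / (2 * L) ≤ min t ℓ / (2 * L) := by gcongr
    have : (t - C) / (2 * L) = t / (2 * L) - C / (2 * L) := sub_div _ _ _
    linarith
  · have := hγ.sub_le_gromovProd hs₀ (min_le_right _ _) le_rfl
    rw [hγo] at this
    linarith
  · have := hγ.dist_le le_rfl hs₀ (min_le_right _ _)
    rw [hγo] at this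
    linarith [min_le_left t ℓ]

lemma exists_div_sub_le_gromovProd (hf : IsQIEmbedding L c f) (hL : 0 < L)
    (hXh : HyperbolicWith X δX) (hXr : RoughlyGeodesicWith X C) (hY : HyperbolicWith Y δY)
    (o : X) : ∃ B, ∀ x y, gromovProd o x y / (2 * L) - B ≤ gromovProd (f o) (f x) (f y) := by
  have hC := hXr.nonneg o
  obtain ⟨B₁, hB₁⟩ := hf.exists_point_div_sub_le_gromovProd hL hXr hY o
  obtain ⟨B₂, hB₂⟩ := hf.exists_gromovProd_div_sub_le_of_dist_le hL hXr hY o (2 * C + 2)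
    (η := 1 / (4 * L)) (by positivity)
  set M := max B₁ ((5 * C / 2 + 2 * δX) / L + B₂)
  refine ⟨M + 2 * δY, fun x y ↦ ?_⟩
  set t := gromovProd o x y
  have ht := gromovProd_nonneg o x y
  obtain ⟨p, hfpx, hpx, hop⟩ := hB₁ x t ht (gromovProd_le_dist_left o x y)
  obtain ⟨q, hfqy, hqy, hoq⟩ :=
    hB₁ y t ht ((gromovProd_comm o x y).trans_le (gromovProd_le_dist_left o y x))
  have hpq : t - 5 * C / 2 - 2 * δX ≤ gromovProd o p q :=
    hXh.sub_two_mul_le_gromovProd (x := p) (y := x) (z := y) hpx (by linarith)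
      (by rw [gromovProd_comm]; exact hqy)
  have hfpq : t / (2 * L) - M ≤ gromovProd (f o) (f p) (f q) := by
    have := hB₂ p q t ht (by nlinarith [dist_triangle_left p q o, mul_nonneg hC ht])
    have : (t - 5 * C / 2 - 2 * δX) / L ≤ gromovProd o p q / L := by gcongr
    have : (t - 5 * C / 2 - 2 * δX) / L - 1 / (4 * L) * t =
        t / (2 * L) + t / (4 * L) - (5 * C / 2 + 2 * δX) / L := by field_simp; ring
    have : 0 ≤ t / (4 * L) := by positivity
    linarith [le_max_right B₁ ((5 * C / 2 + 2 * δX) / L + B₂)]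
  have hM := le_max_left B₁ ((5 * C / 2 + 2 * δX) / L + B₂)
  have := hY.sub_two_mul_le_gromovProd (x := f x) (u := f y)
    (by rw [gromovProd_comm]; linarith) hfpq (by linarith)
  linarith

lemma exists_gromovProd_le (hf : IsQIEmbedding L c f) (hL : 0 < L)
    (hfg : ∀ y, dist (f (g y)) y ≤ D) (hX : HyperbolicWith X δX)
    (hYh : HyperbolicWith Y δY) (hYr : RoughlyGeodesicWith Y C) (o : X) :
    ∃ B, ∀ x y, gromovProd (f o) (f x) (f y) ≤ 2 * L * gromovProd o x y + B := by
  obtain ⟨B, hB⟩ := (hf.of_dist_comp_le hL hfg).exists_div_sub_le_gromovProd hL hYh hYr hX (f o)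
  refine ⟨2 * L * (B + 3 * (L * (D + c))), fun x y ↦ ?_⟩
  have := hB (f x) (f y)
  have := gromovProd_le_gromovProd_add (g (f o)) o (g (f x)) x (g (f y)) y
  have := hf.dist_comp_le hL hfg o
  have := hf.dist_comp_le hL hfg x
  have := hf.dist_comp_le hL hfg y
  have h : gromovProd (f o) (f x) (f y) / (2 * L) ≤ gromovProd o x y + (B + 3 * (L * (D + c))) := by
    linarith
  rw [div_le_iff₀ (by positivity)] at h
  linarith

end IsQIEmbedding

end

theorem gromovProd_comparable_of_quasiIsometry_general
    {X Y : Type*} [MetricSpace X] [MetricSpace Y]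
    (δX : ℝ) (hXhyp : HyperbolicWith X δX)
    (cX : ℝ) (hXrg : RoughlyGeodesicWith X cX)
    (δY : ℝ) (hYhyp : HyperbolicWith Y δY)
    (cY : ℝ) (hYrg : RoughlyGeodesicWith Y cY)
    (f : X → Y) (L c D : ℝ) (hL : 0 < L)
    (hqie : ∀ x₁ x₂ : X, dist x₁ x₂ / L - c ≤ dist (f x₁) (f x₂) ∧
      dist (f x₁) (f x₂) ≤ L * dist x₁ x₂ + c)
    (hqi_onto : ∀ y : Y, ∃ x : X, dist (f x) y ≤ D)
    (o : X) :
    ∃ L' > (0:ℝ), ∃ C' ≥ (0:ℝ), ∀ x y : X,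
      gromovProd o x y / L' - C' ≤ gromovProd (f o) (f x) (f y) ∧
      gromovProd (f o) (f x) (f y) ≤ L' * gromovProd o x y + C' := by
  have hf : IsQIEmbedding L c f := hqie
  choose g hg using hqi_onto
  obtain ⟨B₁, hB₁⟩ := hf.exists_div_sub_le_gromovProd hL hXhyp hXrg hYhyp o
  obtain ⟨B₂, hB₂⟩ := hf.exists_gromovProd_le hL hg hXhyp hYhyp hYrg o
  refine ⟨2 * L, by positivity, max (max B₁ B₂) 0, le_max_right _ _, fun x y ↦
    ⟨(hB₁ x y).trans' ?_, (hB₂ x y).trans ?_⟩⟩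
  · linarith [le_max_left B₁ B₂, le_max_left (max B₁ B₂) 0]
  · linarith [le_max_right B₁ B₂, le_max_left (max B₁ B₂) 0]

/-- A quasi-isometry between roughly geodesic hyperbolic spaces distorts Gromov
products at most by a multiplicative and additive constant. -/
theorem gromovProd_comparable_of_quasiIsometry
    {X Y : Type*} [MetricSpace X] [MetricSpace Y]
    (δX : ℝ) (hδX : 0 ≤ δX) (hXhyp : HyperbolicWith X δX)
    (cX : ℝ) (hcX : 0 ≤ cX) (hXrg : RoughlyGeodesicWith X cX)
    (δY : ℝ) (hδY : 0 ≤ δY) (hYhyp : HyperbolicWith Y δY)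
    (cY : ℝ) (hcY : 0 ≤ cY) (hYrg : RoughlyGeodesicWith Y cY)
    (f : X → Y) (L c D : ℝ) (hL : 0 < L) (hc : 0 ≤ c) (hD : 0 ≤ D)
    (hqie : ∀ x₁ x₂ : X, dist x₁ x₂ / L - c ≤ dist (f x₁) (f x₂) ∧
      dist (f x₁) (f x₂) ≤ L * dist x₁ x₂ + c)
    (hqi_onto : ∀ y : Y, ∃ x : X, dist (f x) y ≤ D)
    (o : X) :
    ∃ L' > (0:ℝ), ∃ C' ≥ (0:ℝ), ∀ x y : X,
      gromovProd o x y / L' - C' ≤ gromovProd (f o) (f x) (f y) ∧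
      gromovProd (f o) (f x) (f y) ≤ L' * gromovProd o x y + C' :=
  gromovProd_comparable_of_quasiIsometry_general δX hXhyp cX hXrg δY hYhyp cY hYrg f L c D hL hqie
    hqi_onto o
end

section
/- Let G be a locally compact second countable group acting continuously on a locally compact Hausdorff second countable space X, preserving the measure class of a Radon measure ν, and suppose there is C ≥ 1 such that for every g ∈ G the Radon–Nikodym derivative satisfies C⁻¹ ≤ d(g_*ν)/dν ≤ C ν-almost everywhere. Then there exists a G-invariant measure m in the measure class of ν with C⁻¹ ≤ dm/dν ≤ C ν-almost everywhere (in particular m and ν are mutually absolutely continuous with density bounded and bounded away from 0). -/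
/-!
Write `ρ_g = d(g_*ν)/dν`. The cocycle identity `ρ_{gh}(x) = ρ_g(x) ρ_h(g⁻¹x)` shows that for any
sequence `u` in `G` the function `F_u = sup_i ρ_{u_i}` satisfies `F_{gu}(x) = ρ_g(x) F_u(g⁻¹x)`,
i.e. `g_*(F_u ν) = F_{gu} ν`. If `u` is dense, `F_u` dominates every `ρ_γ`: the measure `F_u ν`
is regular (its density is at most `C`) and dominates each `(u_i)_*ν`, while `γ_*ν` is a vague
limit of such measures along a sequence `u_{i_n} → γ`; so `γ_*ν ≤ F_u ν` on open sets, hence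
everywhere. Thus `F_{gu} = F_u` a.e. since `gu` is dense as well, so `m = F_u ν` is invariant,
and `C⁻¹ ≤ 1 = ρ_1 ≤ F_u ≤ C`.
-/

open MeasureTheory Measure Filter Topology Set
open scoped ENNReal NNReal Pointwise

lemma MeasureTheory.ae_le_of_withDensity_le {α : Type*} [MeasurableSpace α] {μ : Measure α}
    [SigmaFinite μ] {f g : α → ℝ≥0∞} (hf : Measurable f)
    (h : μ.withDensity f ≤ μ.withDensity g) : f ≤ᵐ[μ] g :=
  ae_le_of_forall_setLIntegral_le_of_sigmaFinite hf fun s hs _ => by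
    simpa only [withDensity_apply _ hs] using h s

lemma MeasureTheory.Measure.le_of_forall_isOpen_apply_le {α : Type*} [TopologicalSpace α]
    [MeasurableSpace α] {μ m : Measure α} [m.OuterRegular]
    (h : ∀ U, IsOpen U → μ U ≤ m U) : μ ≤ m := fun s => by
  rw [Set.measure_eq_iInf_isOpen s m]
  exact le_iInf₂ fun U hsU => le_iInf fun hU => (measure_mono hsU).trans (h U hU)

section MeasurableAction

variable {G X : Type*} [Group G] [MulAction G X] [MeasurableSpace X]

noncomputable def iSupRnDeriv (ν : Measure X) (u : ℕ → G) (x : X) : ℝ≥0∞ :=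
  ⨆ i, (ν.map (u i • ·)).rnDeriv ν x

lemma measurable_iSupRnDeriv (ν : Measure X) (u : ℕ → G) : Measurable (iSupRnDeriv ν u) :=
  .iSup fun _ => measurable_rnDeriv _ _

variable [MeasurableConstSMul G X]

lemma map_smul_withDensity (ν : Measure X) (g : G) {f : X → ℝ≥0∞} (hf : Measurable f) :
    (ν.withDensity f).map (g • ·) = (ν.map (g • ·)).withDensity fun x => f (g⁻¹ • x) := by
  ext s hs
  rw [map_apply (measurable_const_smul g) hs, withDensity_apply _ (measurable_const_smul g hs),
    withDensity_apply _ hs, restrict_map (measurable_const_smul g) hs,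
    lintegral_map (f := fun x => f (g⁻¹ • x)) (hf.comp (measurable_const_smul g⁻¹))
      (measurable_const_smul g)]
  simp only [inv_smul_smul]

instance sigmaFinite_map_smul (ν : Measure X) [SigmaFinite ν] (g : G) :
    SigmaFinite (ν.map (g • ·)) :=
  (MeasurableEquiv.smul g).sigmaFinite_map

variable {ν : Measure X} [SigmaFinite ν]

lemma rnDeriv_map_smul_mul (hac : ∀ g : G, ν.map (g • ·) ≪ ν) (a b : G) :
    (ν.map ((a * b) • ·)).rnDeriv ν =ᵐ[ν]
      fun x => (ν.map (a • ·)).rnDeriv ν x * (ν.map (b • ·)).rnDeriv ν (a⁻¹ • x) := by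
  have hmeas : Measurable fun x => (ν.map (b • ·)).rnDeriv ν (a⁻¹ • x) :=
    (measurable_rnDeriv _ _).comp (measurable_const_smul a⁻¹)
  have hmap : ν.map ((a * b) • ·) = ν.withDensity
      ((ν.map (a • ·)).rnDeriv ν * fun x => (ν.map (b • ·)).rnDeriv ν (a⁻¹ • x)) := by
    rw [withDensity_mul _ (measurable_rnDeriv _ _) hmeas, withDensity_rnDeriv_eq _ _ (hac a),
      ← map_smul_withDensity _ _ (measurable_rnDeriv _ _), withDensity_rnDeriv_eq _ _ (hac b),
      map_map (measurable_const_smul a) (measurable_const_smul b)]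
    simp only [Function.comp_def, mul_smul]
  rw [hmap]
  exact rnDeriv_withDensity ν ((measurable_rnDeriv _ _).mul hmeas)

lemma iSupRnDeriv_mul_left (hac : ∀ g : G, ν.map (g • ·) ≪ ν) (g : G) (u : ℕ → G) :
    iSupRnDeriv ν (fun i => g * u i) =ᵐ[ν]
      fun x => (ν.map (g • ·)).rnDeriv ν x * iSupRnDeriv ν u (g⁻¹ • x) := by
  filter_upwards [ae_all_iff.2 fun i => rnDeriv_map_smul_mul hac g (u i)] with x hx
  rw [iSupRnDeriv, iSupRnDeriv, ENNReal.mul_iSup]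
  exact iSup_congr hx

end MeasurableAction

section ContinuousAction

variable {G X : Type*} [Group G] [TopologicalSpace G] [ContinuousInv G] [MulAction G X]
  [TopologicalSpace X] [ContinuousSMul G X] [MeasurableSpace X] [BorelSpace X]

lemma tendsto_lintegral_comp_smul {ν : Measure X} [IsFiniteMeasureOnCompacts ν]
    {ψ : X → ℝ≥0∞} (hψ : Continuous ψ) (hψs : HasCompactSupport ψ) {c : ℝ≥0∞} (hc : c ≠ ∞)
    (hψc : ∀ x, ψ x ≤ c) {v : ℕ → G} {γ : G} (hv : Tendsto v atTop (𝓝 γ)) :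
    Tendsto (fun n => ∫⁻ x, ψ (v n • x) ∂ν) atTop (𝓝 (∫⁻ x, ψ (γ • x) ∂ν)) := by
  set K := (insert γ (range v))⁻¹ • tsupport ψ
  have hK : IsCompact K := hv.isCompact_insert_range.inv.smul_set hψs
  have hdom : ∀ n x, ψ (v n • x) ≤ K.indicator (fun _ => c) x := fun n x => by
    by_cases hx : v n • x ∈ tsupport ψ
    · have : x ∈ K := by
        have := smul_mem_smul (inv_mem_inv.2 (mem_insert_of_mem γ (mem_range_self (f := v) n))) hx
        rwa [inv_smul_smul] at this
      simpa [indicator_of_mem this] using hψc _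
    · simp [image_eq_zero_of_notMem_tsupport hx]
  refine tendsto_lintegral_of_dominated_convergence _
    (fun n => hψ.measurable.comp (measurable_const_smul (v n))) (fun n => ae_of_all _ (hdom n))
    ((lintegral_indicator_const_le K c).trans_lt
      (ENNReal.mul_lt_top hc.lt_top hK.measure_lt_top)).ne (ae_of_all _ fun x => ?_)
  exact ((hψ.comp (continuous_id.smul continuous_const)).tendsto γ).comp hv

lemma map_smul_le_of_tendsto [RegularSpace X] [LocallyCompactSpace X] {ν m : Measure X}
    [ν.Regular] [m.OuterRegular] {v : ℕ → G} {γ : G} (hv : Tendsto v atTop (𝓝 γ))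
    (hle : ∀ n, ν.map (v n • ·) ≤ m) : ν.map (γ • ·) ≤ m := by
  have : (ν.map (γ • ·)).Regular := Regular.map (Homeomorph.smul γ)
  refine le_of_forall_isOpen_apply_le fun U hU => ?_
  rw [hU.measure_eq_iSup_isCompact]
  refine iSup₂_le fun K hKU => iSup_le fun hK => ?_
  obtain ⟨φ, hφK, hφU, hφs, hφ01⟩ := exists_continuous_one_zero_of_isCompact hK
    hU.isClosed_compl (disjoint_compl_right_iff_subset.2 hKU)
  set ψ : X → ℝ≥0∞ := fun x => ENNReal.ofReal (φ x)
  have hψ : Continuous ψ := ENNReal.continuous_ofReal.comp φ.continuous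
  have hψ1 : ∀ x, ψ x ≤ 1 := fun x => by simpa [ψ] using (hφ01 x).2
  have hψU : ψ ≤ U.indicator 1 := fun x => by
    by_cases hx : x ∈ U
    · simpa [hx] using hψ1 x
    · simp [ψ, hx, hφU hx]
  have hlim := tendsto_lintegral_comp_smul (ν := ν) hψ (hφs.comp_left ENNReal.ofReal_zero)
    ENNReal.one_ne_top hψ1 hv
  calc ν.map (γ • ·) K ≤ ν.map (γ • ·) {x | 1 ≤ ψ x} :=
        measure_mono fun x hx => by simp [ψ, hφK hx]
    _ ≤ ∫⁻ x, ψ x ∂ν.map (γ • ·) := by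
        simpa using mul_meas_ge_le_lintegral hψ.measurable 1 (μ := ν.map (γ • ·))
    _ = ∫⁻ x, ψ (γ • x) ∂ν := lintegral_map hψ.measurable (measurable_const_smul γ)
    _ ≤ m U := le_of_tendsto' hlim fun n => calc
        ∫⁻ x, ψ (v n • x) ∂ν = ∫⁻ x, ψ x ∂ν.map (v n • ·) :=
          (lintegral_map hψ.measurable (measurable_const_smul (v n))).symm
        _ ≤ ∫⁻ x, ψ x ∂m := lintegral_mono' (hle n) le_rfl
        _ ≤ ∫⁻ x, U.indicator 1 x ∂m := lintegral_mono hψU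
        _ ≤ m U := lintegral_indicator_one_le U

end ContinuousAction

section DenseSequence

variable {G X : Type*} [Group G] [TopologicalSpace G] [MulAction G X]
  [TopologicalSpace X] [LocallyCompactSpace X] [T2Space X] [SecondCountableTopology X]
  [ContinuousSMul G X] [MeasurableSpace X] [BorelSpace X] {ν : Measure X} [ν.Regular]

lemma rnDeriv_map_smul_le_iSupRnDeriv [ContinuousInv G] [FrechetUrysohnSpace G]
    (hac : ∀ g : G, ν.map (g • ·) ≪ ν) {C : ℝ≥0} {u : ℕ → G}
    (hbdd : ∀ i, (ν.map (u i • ·)).rnDeriv ν ≤ᵐ[ν] fun _ => C) (hu : DenseRange u) (γ : G) :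
    (ν.map (γ • ·)).rnDeriv ν ≤ᵐ[ν] iSupRnDeriv ν u := by
  set m := ν.withDensity (iSupRnDeriv ν u)
  -- `m ≤ C • ν` is locally finite, hence regular since `X` is metrizable and σ-compact
  have : IsLocallyFiniteMeasure m := isLocallyFiniteMeasure_of_le (μ := C • ν) <| by
    rw [ENNReal.smul_def, ← withDensity_const]
    exact withDensity_mono ((ae_all_iff.2 hbdd).mono fun _ => iSup_le)
  have hle : ∀ i, ν.map (u i • ·) ≤ m := fun i => by
    rw [← withDensity_rnDeriv_eq _ _ (hac (u i))]
    exact withDensity_mono (ae_of_all _ fun x => le_iSup (fun j => (ν.map (u j • ·)).rnDeriv ν x) i)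
  obtain ⟨v, hvu, hv⟩ := mem_closure_iff_seq_limit.1 (hu γ)
  refine ae_le_of_withDensity_le (measurable_rnDeriv _ _) ?_
  rw [withDensity_rnDeriv_eq _ _ (hac γ)]
  refine map_smul_le_of_tendsto hv fun n => ?_
  obtain ⟨i, hi⟩ := hvu n
  exact hi ▸ hle i

lemma iSupRnDeriv_ae_le [ContinuousInv G] [FrechetUrysohnSpace G]
    (hac : ∀ g : G, ν.map (g • ·) ≪ ν) {C : ℝ≥0} {u : ℕ → G}
    (hbdd : ∀ i, (ν.map (u i • ·)).rnDeriv ν ≤ᵐ[ν] fun _ => C) (hu : DenseRange u) (w : ℕ → G) :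
    iSupRnDeriv ν w ≤ᵐ[ν] iSupRnDeriv ν u :=
  (ae_all_iff.2 fun i => rnDeriv_map_smul_le_iSupRnDeriv hac hbdd hu (w i)).mono fun _ => iSup_le

lemma one_le_iSupRnDeriv [ContinuousInv G] [FrechetUrysohnSpace G]
    (hac : ∀ g : G, ν.map (g • ·) ≪ ν) {C : ℝ≥0} {u : ℕ → G}
    (hbdd : ∀ i, (ν.map (u i • ·)).rnDeriv ν ≤ᵐ[ν] fun _ => C) (hu : DenseRange u) :
    ∀ᵐ x ∂ν, 1 ≤ iSupRnDeriv ν u x := by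
  filter_upwards [rnDeriv_map_smul_le_iSupRnDeriv hac hbdd hu 1, rnDeriv_self ν] with x hx hone
  simpa only [one_smul, Measure.map_id', hone, Pi.one_apply] using hx

lemma map_smul_withDensity_iSupRnDeriv [IsTopologicalGroup G] [FrechetUrysohnSpace G]
    (hac : ∀ g : G, ν.map (g • ·) ≪ ν) {C : ℝ≥0}
    (hbdd : ∀ g : G, (ν.map (g • ·)).rnDeriv ν ≤ᵐ[ν] fun _ => C) {u : ℕ → G}
    (hu : DenseRange u) (g : G) :
    (ν.withDensity (iSupRnDeriv ν u)).map (g • ·) = ν.withDensity (iSupRnDeriv ν u) := by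
  have hgu : DenseRange fun i => g * u i :=
    (Homeomorph.mulLeft g).surjective.denseRange.comp hu (continuous_const_mul g)
  rw [map_smul_withDensity _ g (measurable_iSupRnDeriv ν u), ← withDensity_rnDeriv_eq _ _ (hac g),
    ← withDensity_mul (g := fun x => iSupRnDeriv ν u (g⁻¹ • x)) _ (measurable_rnDeriv _ _)
      ((measurable_iSupRnDeriv ν u).comp (measurable_const_smul g⁻¹))]
  refine withDensity_congr_ae ?_
  filter_upwards [iSupRnDeriv_mul_left hac g u, iSupRnDeriv_ae_le hac (fun _ => hbdd _) hu _,
    iSupRnDeriv_ae_le hac (fun _ => hbdd _) hgu u] with x hmul hle hge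
  exact hmul.symm.trans (le_antisymm hle hge)

end DenseSequence

theorem exists_invariant_measure_of_bounded_rnDeriv_general
    {G X : Type*} [Group G] [TopologicalSpace G] [IsTopologicalGroup G]
    [SecondCountableTopology G]
    [TopologicalSpace X] [LocallyCompactSpace X] [T2Space X] [SecondCountableTopology X]
    [MeasurableSpace X] [BorelSpace X]
    [MulAction G X] [ContinuousSMul G X]
    (ν : Measure X) [ν.Regular]
    (C : ℝ) (hC : 1 ≤ C)
    (hclass : ∀ g : G, Measure.map (fun x : X => g • x) ν ≪ ν ∧
      ν ≪ Measure.map (fun x : X => g • x) ν)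
    (hrn : ∀ g : G, ∀ᵐ x ∂ν,
      ENNReal.ofReal C⁻¹ ≤ (Measure.map (fun x : X => g • x) ν).rnDeriv ν x ∧
      (Measure.map (fun x : X => g • x) ν).rnDeriv ν x ≤ ENNReal.ofReal C) :
    ∃ m : Measure X, (∀ g : G, Measure.map (fun x : X => g • x) m = m) ∧
      m ≪ ν ∧ ν ≪ m ∧
      ∀ᵐ x ∂ν, ENNReal.ofReal C⁻¹ ≤ m.rnDeriv ν x ∧ m.rnDeriv ν x ≤ ENNReal.ofReal C := by
  have hac g := (hclass g).1
  have hbdd : ∀ g : G, (ν.map (g • ·)).rnDeriv ν ≤ᵐ[ν] fun _ => (C.toNNReal : ℝ≥0∞) :=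
    fun g => (hrn g).mono fun _ hx => hx.2
  set u := TopologicalSpace.denseSeq G
  have hu : DenseRange u := TopologicalSpace.denseRange_denseSeq G
  have hone := one_le_iSupRnDeriv hac (fun i => hbdd (u i)) hu
  refine ⟨ν.withDensity (iSupRnDeriv ν u), map_smul_withDensity_iSupRnDeriv hac hbdd hu,
    withDensity_absolutelyContinuous _ _, withDensity_absolutelyContinuous'
      (measurable_iSupRnDeriv ν u).aemeasurable (hone.mono fun _ hx => (one_pos.trans_le hx).ne'),
    ?_⟩
  filter_upwards [rnDeriv_withDensity ν (measurable_iSupRnDeriv ν u), hone,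
    ae_all_iff.2 fun i => hbdd (u i)] with x hdens hlow hup
  rw [hdens]
  exact ⟨(ENNReal.ofReal_le_one.2 (inv_le_one_of_one_le₀ hC)).trans hlow, iSup_le hup⟩

/-- If a locally compact second countable group acts continuously on a locally compact
Hausdorff second countable space preserving the measure class of a Radon measure `ν`
with Radon–Nikodym derivatives uniformly bounded between `C⁻¹` and `C`, then there is a
`G`-invariant measure `m` in the class of `ν` with `C⁻¹ ≤ dm/dν ≤ C` a.e. -/
theorem exists_invariant_measure_of_bounded_rnDeriv
    {G X : Type*} [Group G] [TopologicalSpace G] [IsTopologicalGroup G]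
    [LocallyCompactSpace G] [SecondCountableTopology G]
    [TopologicalSpace X] [LocallyCompactSpace X] [T2Space X] [SecondCountableTopology X]
    [MeasurableSpace X] [BorelSpace X]
    [MulAction G X] [ContinuousSMul G X]
    (ν : Measure X) [ν.Regular]
    (C : ℝ) (hC : 1 ≤ C)
    (hclass : ∀ g : G, Measure.map (fun x : X => g • x) ν ≪ ν ∧
      ν ≪ Measure.map (fun x : X => g • x) ν)
    (hrn : ∀ g : G, ∀ᵐ x ∂ν,
      ENNReal.ofReal C⁻¹ ≤ (Measure.map (fun x : X => g • x) ν).rnDeriv ν x ∧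
      (Measure.map (fun x : X => g • x) ν).rnDeriv ν x ≤ ENNReal.ofReal C) :
    ∃ m : Measure X, (∀ g : G, Measure.map (fun x : X => g • x) m = m) ∧
      m ≪ ν ∧ ν ≪ m ∧
      ∀ᵐ x ∂ν, ENNReal.ofReal C⁻¹ ≤ m.rnDeriv ν x ∧ m.rnDeriv ν x ≤ ENNReal.ofReal C :=
  exists_invariant_measure_of_bounded_rnDeriv_general ν C hC hclass hrn
end

section
/- Let G be a locally compact second countable group with a Borel measurable, measure-class-preserving action on a standard Borel probability space (X,μ). Let α : G × X → ℝ be a strict Borel cocycle and σ : G × X → ℝ a strict Borel almost cocycle, and suppose there is C₁ ≥ 0 such that for every g ∈ G, |α(g,x) − σ(g,x)| ≤ C₁ for μ-almost every x. Then there exist a Borel function F : X → ℝ, a G-invariant Borel set S ⊆ X with μ(X∖S) = 0, and a constant C₂ ≥ 0 such that the strict cocycle ρ(g,x) := α(g,x) − F(x) + F(g·x) (which is strictly cohomologous to α) satisfies |ρ(g,x) − σ(g,x)| ≤ C₂ for ALL g ∈ G and ALL x ∈ S. -/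
open MeasureTheory

/-- On a locally compact second countable group there is a probability measure that is
quasi-invariant under all right translations (e.g. one equivalent to Haar measure). -/
lemma exists_right_quasi_invariant_prob (G : Type*) [Group G] [TopologicalSpace G]
    [IsTopologicalGroup G] [LocallyCompactSpace G] [SecondCountableTopology G]
    [MeasurableSpace G] [BorelSpace G] :
    ∃ m : Measure G, IsProbabilityMeasure m ∧
      ∀ c : G, Measure.map (fun h => h * c) m ≪ m := by
  let ν : Measure G := Measure.haar
  have hq : ∀ c : G, Measure.map (fun h => h * c) ν ≪ ν := fun c =>
    (MeasureTheory.quasiMeasurePreserving_mul_right ν c).absolutelyContinuous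
  refine ⟨ν.toFinite, inferInstance, fun c => ?_⟩
  exact (((toFinite_absolutelyContinuous ν).map (measurable_mul_const c)).trans (hq c)).trans
    (absolutelyContinuous_toFinite ν)

/-- Straightening an almost cocycle: if a strict Borel cocycle `α` is, for every
group element, almost everywhere within a bounded distance of a strict Borel almost
cocycle `σ`, then `α` is strictly cohomologous to a strict cocycle
`ρ(g,x) = α(g,x) - F(x) + F(g·x)` which is within a bounded distance of `σ`
everywhere on a `G`-invariant conull Borel set `S`. -/
theorem exists_strictly_cohomologous_cocycle_close_to_almost_cocycle
    {G X : Type*} [Group G] [TopologicalSpace G] [IsTopologicalGroup G]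
    [LocallyCompactSpace G] [SecondCountableTopology G]
    [MeasurableSpace G] [BorelSpace G]
    [MeasurableSpace X] [StandardBorelSpace X]
    [MulAction G X]
    (hact : Measurable fun p : G × X => p.1 • p.2)
    (μ : Measure X) [IsProbabilityMeasure μ]
    (hclass : ∀ g : G, Measure.map (fun x : X => g • x) μ ≪ μ ∧
      μ ≪ Measure.map (fun x : X => g • x) μ)
    (α σ : G → X → ℝ)
    (hα_meas : Measurable fun p : G × X => α p.1 p.2)
    (hα_cocycle : ∀ g h : G, ∀ x : X, α (g * h) x = α g (h • x) + α h x)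
    (hσ_meas : Measurable fun p : G × X => σ p.1 p.2)
    (C₀ : ℝ) (hC₀ : 0 ≤ C₀)
    (hσ_almost : ∀ g h : G, ∀ x : X, |σ (g * h) x - σ g (h • x) - σ h x| ≤ C₀)
    (C₁ : ℝ) (hC₁ : 0 ≤ C₁)
    (hclose : ∀ g : G, ∀ᵐ x ∂μ, |α g x - σ g x| ≤ C₁) :
    ∃ F : X → ℝ, Measurable F ∧
      ∃ S : Set X, MeasurableSet S ∧
        (∀ g : G, ∀ x : X, x ∈ S ↔ g • x ∈ S) ∧
        μ Sᶜ = 0 ∧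
        ∃ C₂ : ℝ, 0 ≤ C₂ ∧ ∀ g : G, ∀ x ∈ S,
          |(α g x - F x + F (g • x)) - σ g x| ≤ C₂ := by
  classical
  obtain ⟨m, hmP, hm⟩ := exists_right_quasi_invariant_prob G
  haveI : Filter.NeBot (MeasureTheory.ae m) := ae_neBot.mpr (IsProbabilityMeasure.ne_zero m)
  -- the difference function and the defect of `σ`
  set D : G → X → ℝ := fun g x => α g x - σ g x with hDdef
  have hD_meas : Measurable fun p : G × X => D p.1 p.2 := hα_meas.sub hσ_meas
  set ε : G → G → X → ℝ := fun g c x => σ (g * c) x - σ g (c • x) - σ c x with hεdef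
  have hε_bdd : ∀ g c : G, ∀ x : X, |ε g c x| ≤ C₀ := fun g c x => hσ_almost g c x
  have hkey : ∀ h c : G, ∀ y : X, D h (c • y) = D (h * c) y - D c y + ε h c y := by
    intro h c y
    have h1 := hα_cocycle h c y
    simp only [hDdef, hεdef]
    linarith
  -- transfer of almost-everywhere statements under right translation
  have htrans : ∀ (c : G) (p : G → Prop), MeasurableSet {h : G | p h} →
      (∀ᵐ h ∂m, p h) → (∀ᵐ h ∂m, p (h * c)) := by
    intro c p hp hae
    rw [ae_iff] at hae ⊢
    have h0 : (Measure.map (fun h => h * c) m) {h | ¬ p h} = 0 := hm c hae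
    rwa [Measure.map_apply (measurable_mul_const c)
      (show MeasurableSet {h : G | ¬ p h} from hp.compl)] at h0
  -- the set where `D(·, x)` is a.e. bounded by `C₁`
  set T : Set (G × X) := {p | |D p.1 p.2| ≤ C₁} with hTdef
  have hT : MeasurableSet T := measurableSet_le hD_meas.abs measurable_const
  set S₀ : Set X := (fun x => m ((fun h => (h, x)) ⁻¹' Tᶜ)) ⁻¹' {0} with hS₀def
  have hS₀ : MeasurableSet S₀ :=
    (measurable_measure_prodMk_right hT.compl) (measurableSet_singleton 0)
  have hS₀_mem : ∀ y : X, y ∈ S₀ ↔ ∀ᵐ k ∂m, |D k y| ≤ C₁ := by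
    intro y
    rw [ae_iff]
    exact Iff.rfl
  -- the invariant set `S`
  set U : Set (G × X) := (fun p : G × X => p.1 • p.2) ⁻¹' S₀ᶜ with hUdef
  have hU : MeasurableSet U := hact hS₀.compl
  set S : Set X := (fun x => m ((fun h => (h, x)) ⁻¹' U)) ⁻¹' {0} with hSdef
  have hS : MeasurableSet S :=
    (measurable_measure_prodMk_right hU) (measurableSet_singleton 0)
  have hS_mem : ∀ x : X, x ∈ S ↔ ∀ᵐ h ∂m, h • x ∈ S₀ := by
    intro x
    rw [ae_iff]
    exact Iff.rfl
  -- `S₀` is conull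
  have hS₀_ae : ∀ᵐ x ∂μ, x ∈ S₀ := by
    have h1 : ∀ᵐ g ∂m, ∀ᵐ x ∂μ, |D g x| ≤ C₁ :=
      Filter.Eventually.of_forall fun g => hclose g
    have h2 := (Measure.ae_ae_comm (μ := m) (ν := μ)
      (p := fun g x => |D g x| ≤ C₁) hT).mp h1
    filter_upwards [h2] with x hx using (hS₀_mem x).mpr hx
  -- `S` is conull
  have hmove : ∀ g : G, ∀ᵐ x ∂μ, g • x ∈ S₀ := by
    intro g
    have hg : Measurable fun x : X => g • x :=
      hact.comp (measurable_const.prodMk measurable_id)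
    have h0 : μ S₀ᶜ = 0 := by
      have := ae_iff.mp hS₀_ae
      simpa [Set.compl_def] using this
    have h1 : (Measure.map (fun x => g • x) μ) S₀ᶜ = 0 := (hclass g).1 h0
    rw [Measure.map_apply hg hS₀.compl] at h1
    rw [ae_iff]
    exact h1
  have hS_ae : ∀ᵐ x ∂μ, x ∈ S := by
    have hU' : MeasurableSet {q : G × X | q.1 • q.2 ∈ S₀} := hact hS₀
    have h1 : ∀ᵐ g ∂m, ∀ᵐ x ∂μ, g • x ∈ S₀ := Filter.Eventually.of_forall hmove
    have h2 := (Measure.ae_ae_comm (μ := m) (ν := μ)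
      (p := fun g x => g • x ∈ S₀) hU').mp h1
    filter_upwards [h2] with x hx using (hS_mem x).mpr hx
  have hS_null : μ Sᶜ = 0 := by
    have := ae_iff.mp hS_ae
    simpa [Set.compl_def] using this
  -- `S` is invariant
  have hS_fwd : ∀ (g : G) (x : X), x ∈ S → g • x ∈ S := by
    intro g x hx
    rw [hS_mem] at hx ⊢
    have hmeas : MeasurableSet {h : G | h • x ∈ S₀} :=
      (hact.comp (measurable_id.prodMk measurable_const)) hS₀
    have h1 := htrans g (fun h => h • x ∈ S₀) hmeas hx
    filter_upwards [h1] with h hh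
    rwa [mul_smul] at hh
  have hS_inv : ∀ (g : G) (x : X), x ∈ S ↔ g • x ∈ S := by
    intro g x
    refine ⟨hS_fwd g x, fun h => ?_⟩
    have := hS_fwd g⁻¹ (g • x) h
    rwa [inv_smul_smul] at this
  -- the transfer function
  set F : X → ℝ := fun x => ∫ h, D h x ∂m with hFdef
  have hF_meas : Measurable F := by
    have h1 : Measurable fun q : X × G => D q.2 q.1 := by
      exact hD_meas.comp (measurable_snd.prodMk measurable_fst)
    exact (h1.stronglyMeasurable.integral_prod_right' (ν := m)).measurable
  refine ⟨F, hF_meas, S, hS, hS_inv, hS_null, 2 * C₁ + 3 * C₀, by linarith, ?_⟩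
  intro g x hx
  obtain ⟨g₀, hg₀⟩ : ∃ g₀ : G, g₀ • x ∈ S₀ := ((hS_mem x).mp hx).exists
  set y : X := g₀ • x with hy
  have hyS₀ : ∀ᵐ k ∂m, |D k y| ≤ C₁ := (hS₀_mem y).mp hg₀
  have hxy : x = g₀⁻¹ • y := by rw [hy, inv_smul_smul]
  -- integrability and bounds for the shifted difference functions
  have hDc_meas : ∀ c : G, Measurable fun h : G => D (h * c) y := fun c =>
    hD_meas.comp ((measurable_mul_const c).prodMk measurable_const)
  have hDy_meas : MeasurableSet {k : G | |D k y| ≤ C₁} :=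
    measurableSet_le (hD_meas.comp (measurable_id.prodMk measurable_const)).abs
      measurable_const
  have hDc_ae : ∀ c : G, ∀ᵐ h ∂m, |D (h * c) y| ≤ C₁ := fun c =>
    htrans c (fun k => |D k y| ≤ C₁) hDy_meas hyS₀
  have hDc_int : ∀ c : G, Integrable (fun h => D (h * c) y) m := fun c =>
    Integrable.mono' (integrable_const C₁) (hDc_meas c).aestronglyMeasurable
      (by filter_upwards [hDc_ae c] with h hh; rwa [Real.norm_eq_abs])
  have hDc_bd : ∀ c : G, |∫ h, D (h * c) y ∂m| ≤ C₁ := by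
    intro c
    have h1 := norm_integral_le_of_norm_le_const (μ := m)
      (f := fun h => D (h * c) y) (C := C₁)
      (by filter_upwards [hDc_ae c] with h hh; rwa [Real.norm_eq_abs])
    rwa [Real.norm_eq_abs, probReal_univ, mul_one] at h1
  -- integrability and bounds for the defect functions
  have hεc_meas : ∀ c : G, Measurable fun h : G => ε h c y := by
    intro c
    apply Measurable.sub
    apply Measurable.sub
    · exact hσ_meas.comp ((measurable_mul_const c).prodMk measurable_const)
    · exact hσ_meas.comp (measurable_id.prodMk measurable_const)
    · exact measurable_const
  have hεc_int : ∀ c : G, Integrable (fun h => ε h c y) m := fun c =>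
    Integrable.mono' (integrable_const C₀) (hεc_meas c).aestronglyMeasurable
      (Filter.Eventually.of_forall fun h => by
        rw [Real.norm_eq_abs]; exact hε_bdd h c y)
  have hεc_bd : ∀ c : G, |∫ h, ε h c y ∂m| ≤ C₀ := by
    intro c
    have h1 := norm_integral_le_of_norm_le_const (μ := m)
      (f := fun h => ε h c y) (C := C₀)
      (Filter.Eventually.of_forall fun h => by
        rw [Real.norm_eq_abs]; exact hε_bdd h c y)
    rwa [Real.norm_eq_abs, probReal_univ, mul_one] at h1
  -- decomposition of `F` at translates of `y`
  have hF_eq : ∀ c : G,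
      F (c • y) = (∫ h, D (h * c) y ∂m) - D c y + ∫ h, ε h c y ∂m := by
    intro c
    have h1 : F (c • y) = ∫ h, (D (h * c) y - D c y + ε h c y) ∂m :=
      integral_congr_ae (Filter.Eventually.of_forall fun h => hkey h c y)
    have i1 : Integrable (fun h => D (h * c) y - D c y) m :=
      (hDc_int c).sub (integrable_const _)
    rw [h1, integral_add i1 (hεc_int c),
      integral_sub (hDc_int c) (integrable_const _), integral_const]
    simp [measure_univ]
  have e1 : F x = (∫ h, D (h * g₀⁻¹) y ∂m) - D g₀⁻¹ y + ∫ h, ε h g₀⁻¹ y ∂m := by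
    rw [hxy]; exact hF_eq g₀⁻¹
  have e2 : F (g • x) = (∫ h, D (h * (g * g₀⁻¹)) y ∂m) - D (g * g₀⁻¹) y
      + ∫ h, ε h (g * g₀⁻¹) y ∂m := by
    have h1 : g • x = (g * g₀⁻¹) • y := by rw [hxy, smul_smul]
    rw [h1]; exact hF_eq (g * g₀⁻¹)
  have e3 : D g x = D (g * g₀⁻¹) y - D g₀⁻¹ y + ε g g₀⁻¹ y := by
    rw [hxy]; exact hkey g g₀⁻¹ y
  have hDgx : α g x - σ g x = D g x := rfl
  have target_eq : (α g x - F x + F (g • x)) - σ g x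
      = ε g g₀⁻¹ y
        + ((∫ h, D (h * (g * g₀⁻¹)) y ∂m) - ∫ h, D (h * g₀⁻¹) y ∂m)
        + ((∫ h, ε h (g * g₀⁻¹) y ∂m) - ∫ h, ε h g₀⁻¹ y ∂m) := by
    linear_combination hDgx + e3 - e1 + e2
  rw [target_eq]
  have b1 := abs_le.mp (hε_bdd g g₀⁻¹ y)
  have b2 := abs_le.mp (hDc_bd g₀⁻¹)
  have b3 := abs_le.mp (hDc_bd (g * g₀⁻¹))
  have b4 := abs_le.mp (hεc_bd g₀⁻¹)
  have b5 := abs_le.mp (hεc_bd (g * g₀⁻¹))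
  rw [abs_le]
  constructor <;> linarith
end

section
/- Let (X,μ) be a finite measure space and let P be an orthogonal projection (a bounded self-adjoint idempotent operator) on L²(X,μ). Then both P and I − P map almost-everywhere nonnegative functions to almost-everywhere nonnegative functions if and only if there exists a measurable set E ⊆ X such that P is the operator of multiplication by the indicator function 1_E (equivalently, the range of P is the subspace L²(E) of functions vanishing a.e. off E). -/
/-!
Since the range and kernel of `P` are orthogonal, `⟪P f, h - P h⟫ = 0`; when `f, h ≥ 0` this is
the integral of the nonnegative function `P f * (h - P h)`, which therefore vanishes a.e.
For `g = P 1`, taking `f = h = 1` gives `g (1 - g) = 0`, so `g` is the indicator of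
`E = {g = 1}`; taking `(f, 1)` and `(1, f)` gives `P f (1 - g) = 0` and `g (f - P f) = 0`,
i.e. `P f = g f`, for `f ≥ 0`, hence for all `f = f⁺ - f⁻`.
-/

open MeasureTheory

theorem inner_map_self_sub_map_eq_zero {𝕜 E : Type*} [RCLike 𝕜] [NormedAddCommGroup E]
    [InnerProductSpace 𝕜 E] (P : E →ₗ[𝕜] E) (hidem : ∀ f, P (P f) = P f)
    (hsa : ∀ f g, inner 𝕜 (P f) g = inner 𝕜 f (P g)) (f g : E) :
    inner 𝕜 (P f) (g - P g) = 0 := by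
  rw [hsa, map_sub, hidem, sub_self, inner_zero_right]

namespace MeasureTheory

variable {X : Type*} [MeasurableSpace X] {μ : Measure X}

theorem L2.real_inner_eq_integral (u v : Lp ℝ 2 μ) : inner ℝ u v = ∫ x, u x * v x ∂μ := by
  simp only [L2.inner_def, Real.inner_apply]

theorem L2.ae_mul_eq_zero_of_inner_eq_zero {u v : Lp ℝ 2 μ} (hu : ∀ᵐ x ∂μ, 0 ≤ u x)
    (hv : ∀ᵐ x ∂μ, 0 ≤ v x) (huv : inner ℝ u v = 0) : ∀ᵐ x ∂μ, u x * v x = 0 := by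
  have hint : Integrable (fun x => u x * v x) μ := by
    simpa only [Real.inner_apply] using L2.integrable_inner (𝕜 := ℝ) u v
  have hnonneg : 0 ≤ᵐ[μ] fun x => u x * v x := by
    filter_upwards [hu, hv] with x hux hvx using mul_nonneg hux hvx
  rwa [L2.real_inner_eq_integral, integral_eq_zero_iff_of_nonneg_ae hnonneg hint] at huv

theorem Lp.ae_eq_mul_of_forall_nonneg {p q : ENNReal} [Fact (1 ≤ p)]
    (T : Lp ℝ p μ →+ Lp ℝ q μ) (φ : X → ℝ)
    (h : ∀ f : Lp ℝ p μ, 0 ≤ f → T f =ᵐ[μ] fun x => φ x * f x) (f : Lp ℝ p μ) :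
    T f =ᵐ[μ] fun x => φ x * f x := by
  rw [← posPart_sub_negPart f, map_sub]
  filter_upwards [Lp.coeFn_sub (T f⁺) (T f⁻), Lp.coeFn_sub f⁺ f⁻, h _ (posPart_nonneg f),
    h _ (negPart_nonneg f)] with x hT hf hpos hneg
  rw [hT, hf, Pi.sub_apply, Pi.sub_apply, hpos, hneg, mul_sub]

section Projection

variable (P : Lp ℝ 2 μ → Lp ℝ 2 μ)

theorem ae_map_mul_sub_map_eq_zero (horth : ∀ f g, inner ℝ (P f) (g - P g) = 0)
    (hpos : ∀ f : Lp ℝ 2 μ, (∀ᵐ x ∂μ, 0 ≤ f x) → ∀ᵐ x ∂μ, 0 ≤ P f x)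
    (hcopos : ∀ f : Lp ℝ 2 μ, (∀ᵐ x ∂μ, 0 ≤ f x) → ∀ᵐ x ∂μ, 0 ≤ f x - P f x)
    {f g : Lp ℝ 2 μ} (hf : ∀ᵐ x ∂μ, 0 ≤ f x) (hg : ∀ᵐ x ∂μ, 0 ≤ g x) :
    ∀ᵐ x ∂μ, P f x * (g x - P g x) = 0 := by
  have hsub := Lp.coeFn_sub g (P g)
  have hnonneg : ∀ᵐ x ∂μ, 0 ≤ (g - P g) x := by
    filter_upwards [hcopos g hg, hsub] with x hx hx' using hx'.symm ▸ hx
  filter_upwards [L2.ae_mul_eq_zero_of_inner_eq_zero (hpos f hf) hnonneg (horth f g), hsub]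
    with x hx hx'
  rwa [hx'] at hx

variable [IsFiniteMeasure μ]

theorem Lp.ae_const_nonneg {p : ENNReal} {c : ℝ} (hc : 0 ≤ c) :
    ∀ᵐ x ∂μ, 0 ≤ Lp.const p μ c x := by
  filter_upwards [Lp.coeFn_const (p := p) (μ := μ) c] with x hx using hx ▸ hc

theorem ae_map_const_one_eq_zero_or_one (horth : ∀ f g, inner ℝ (P f) (g - P g) = 0)
    (hpos : ∀ f : Lp ℝ 2 μ, (∀ᵐ x ∂μ, 0 ≤ f x) → ∀ᵐ x ∂μ, 0 ≤ P f x)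
    (hcopos : ∀ f : Lp ℝ 2 μ, (∀ᵐ x ∂μ, 0 ≤ f x) → ∀ᵐ x ∂μ, 0 ≤ f x - P f x) :
    ∀ᵐ x ∂μ, P (Lp.const 2 μ 1) x = 0 ∨ P (Lp.const 2 μ 1) x = 1 := by
  filter_upwards [ae_map_mul_sub_map_eq_zero P horth hpos hcopos (Lp.ae_const_nonneg zero_le_one)
    (Lp.ae_const_nonneg zero_le_one), Lp.coeFn_const (p := 2) (μ := μ) (1 : ℝ)] with x hx hone
  rw [hone, Function.const_apply, mul_eq_zero, sub_eq_zero] at hx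
  exact hx.imp id Eq.symm

theorem ae_map_eq_map_const_one_mul_of_nonneg (horth : ∀ f g, inner ℝ (P f) (g - P g) = 0)
    (hpos : ∀ f : Lp ℝ 2 μ, (∀ᵐ x ∂μ, 0 ≤ f x) → ∀ᵐ x ∂μ, 0 ≤ P f x)
    (hcopos : ∀ f : Lp ℝ 2 μ, (∀ᵐ x ∂μ, 0 ≤ f x) → ∀ᵐ x ∂μ, 0 ≤ f x - P f x)
    {f : Lp ℝ 2 μ} (hf : ∀ᵐ x ∂μ, 0 ≤ f x) :
    P f =ᵐ[μ] fun x => P (Lp.const 2 μ 1) x * f x := by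
  filter_upwards
    [ae_map_mul_sub_map_eq_zero P horth hpos hcopos hf (Lp.ae_const_nonneg zero_le_one),
    ae_map_mul_sub_map_eq_zero P horth hpos hcopos (Lp.ae_const_nonneg zero_le_one) hf,
    ae_map_const_one_eq_zero_or_one P horth hpos hcopos,
    Lp.coeFn_const (p := 2) (μ := μ) (1 : ℝ)] with x hf1 h1f hg hone
  rw [hone, Function.const_apply] at hf1
  rcases hg with hg | hg <;> rw [hg] at hf1 h1f ⊢ <;> linarith

end Projection

end MeasureTheory

/-- An orthogonal projection `P` on `L²(X,μ)` is such that both `P` and `I - P`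
preserve a.e.-nonnegativity if and only if `P` is multiplication by the indicator
function of a measurable set `E`. -/
theorem orthogonalProjection_positive_iff_indicator
    {X : Type*} [MeasurableSpace X] (μ : Measure X) [IsFiniteMeasure μ]
    (P : Lp ℝ 2 μ →L[ℝ] Lp ℝ 2 μ)
    (hidem : ∀ f : Lp ℝ 2 μ, P (P f) = P f)
    (hsa : ∀ f g : Lp ℝ 2 μ, @inner ℝ _ _ (P f) g = @inner ℝ _ _ f (P g)) :
    ((∀ f : Lp ℝ 2 μ, (∀ᵐ x ∂μ, 0 ≤ f x) → (∀ᵐ x ∂μ, 0 ≤ (P f) x)) ∧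
      (∀ f : Lp ℝ 2 μ, (∀ᵐ x ∂μ, 0 ≤ f x) → (∀ᵐ x ∂μ, 0 ≤ f x - (P f) x)))
    ↔ ∃ E : Set X, MeasurableSet E ∧ ∀ f : Lp ℝ 2 μ,
        (P f : X → ℝ) =ᵐ[μ] fun x => E.indicator (fun _ => (1:ℝ)) x * f x := by
  constructor
  · rintro ⟨hpos, hcopos⟩
    have horth := inner_map_self_sub_map_eq_zero P.toLinearMap hidem hsa
    set g := P (Lp.const 2 μ 1)
    refine ⟨{x | g x = 1}, (Lp.stronglyMeasurable g).measurable (measurableSet_singleton 1),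
      fun f => ?_⟩
    have hg : ∀ᵐ x ∂μ, g x = 0 ∨ g x = 1 := ae_map_const_one_eq_zero_or_one P horth hpos hcopos
    have hind : g =ᵐ[μ] {x | g x = 1}.indicator (fun _ => (1 : ℝ)) := by
      filter_upwards [hg] with x hx
      rcases hx with hx | hx <;> simp [Set.indicator, hx]
    have hmul := Lp.ae_eq_mul_of_forall_nonneg P.toLinearMap.toAddMonoidHom g
      (fun f hf => ae_map_eq_map_const_one_mul_of_nonneg P horth hpos hcopos
        ((Lp.coeFn_nonneg f).mpr hf)) f
    filter_upwards [hmul, hind] with x hx hgx using hgx ▸ hx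
  · rintro ⟨E, -, hPE⟩
    refine ⟨fun f hf => ?_, fun f hf => ?_⟩ <;> filter_upwards [hPE f, hf] with x hx hfx <;>
      by_cases hE : x ∈ E <;> simp [hx, hE, hfx]
end

section
/- In the setting of the disintegration over a Borel cross section, assume in addition that G is unimodular, and let H be a group acting measurably on Z, preserving the measure m, and commuting with the G-action. Then the induced H-action on the cross section X̂, given by h·x := r(h·x) (the representative in X̂ of the orbit of h·x), preserves the measure ν, i.e. for every h ∈ H the pushforward of ν under x ↦ r(h·x) equals ν. -/
open MeasureTheory Pointwise
open scoped ENNReal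

/-!
Both `ν` and its image under `x ↦ r (h • x)` disintegrate `m` over the cross section: the image
does because `h` preserves `m` and commutes with `G`, and the orbit integral
`x ↦ ∫⁻ g, f (g • x) ∂lam` is constant along `G`-orbits by right invariance of `lam`.
Such a disintegration is unique: for `B` of finite `m`-measure, the density
`w_B x = lam {g | g • x ∈ B}` satisfies `∫⁻ x in A, w_B x ∂ν = m (r ⁻¹' A ∩ B)` for any
disintegration `ν`, so `ν.withDensity w_B` does not depend on `ν`; the sets `V • E n` provide
countably many such `B`, whose densities are a.e. finite and not all zero at any point of `Xh`.
-/

theorem MeasureTheory.Measure.eq_of_withDensity_eq {α ι : Type*} [MeasurableSpace α] [Countable ι]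
    {μ₁ μ₂ : Measure α} {w : ι → α → ℝ≥0∞} (hw : ∀ i, Measurable (w i))
    (heq : ∀ i, μ₁.withDensity (w i) = μ₂.withDensity (w i))
    (h₁ : ∀ᵐ x ∂μ₁, ∃ i, w i x ≠ 0 ∧ w i x ≠ ∞) (h₂ : ∀ᵐ x ∂μ₂, ∃ i, w i x ≠ 0 ∧ w i x ≠ ∞) :
    μ₁ = μ₂ := by
  set S : ι → Set α := fun i => {x | w i x ≠ 0 ∧ w i x ≠ ∞}
  have hS : ∀ i, MeasurableSet (S i) := fun i =>
    (hw i (measurableSet_singleton 0).compl).inter (hw i (measurableSet_singleton ∞).compl)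
  have hrestrict : ∀ (μ : Measure α) (i : ι),
      ((μ.withDensity (w i)).restrict (S i)).withDensity (fun x => (w i x)⁻¹) = μ.restrict (S i) := by
    intro μ i
    rw [restrict_withDensity (hS i)]
    exact withDensity_inv_same (hw i) ((ae_restrict_mem (hS i)).mono fun x hx => hx.1)
      ((ae_restrict_mem (hS i)).mono fun x hx => hx.2)
  have hcover : ∀ μ : Measure α, (∀ᵐ x ∂μ, ∃ i, w i x ≠ 0 ∧ w i x ≠ ∞) →
      μ.restrict (⋃ i, S i) = μ :=
    fun μ h => Measure.restrict_eq_self_of_ae_mem (h.mono fun x hx => Set.mem_iUnion.2 hx)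
  calc μ₁ = μ₁.restrict (⋃ i, S i) := (hcover μ₁ h₁).symm
    _ = μ₂.restrict (⋃ i, S i) := Measure.restrict_iUnion_congr.2 fun i => by
      rw [← hrestrict μ₁ i, ← hrestrict μ₂ i, heq i]
    _ = μ₂ := hcover μ₂ h₂

section OrbitDisintegration

variable {G Z : Type*} [Group G] [MulAction G Z]

theorem rep_smul_eq_self {Xh : Set Z} {r : Z → Z}
    (hcross : ∀ z : Z, ∃! x : Z, x ∈ Xh ∧ x ∈ MulAction.orbit G z)
    (hr : ∀ z : Z, r z ∈ Xh ∧ r z ∈ MulAction.orbit G z) {x : Z} (hx : x ∈ Xh) (g : G) :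
    r (g • x) = x := by
  obtain ⟨y, -, huniq⟩ := hcross x
  have hrg : r (g • x) ∈ Xh ∧ r (g • x) ∈ MulAction.orbit G x :=
    ⟨(hr _).1, MulAction.orbit_smul g x ▸ (hr _).2⟩
  rw [huniq _ hrg, huniq _ ⟨hx, MulAction.mem_orbit_self x⟩]

variable [MeasurableSpace G] {lam : Measure G}

theorem lintegral_comp_smul_smul [MeasurableMul G] [lam.IsMulRightInvariant] (f : Z → ℝ≥0∞)
    (g₀ : G) (x : Z) : ∫⁻ g, f (g • g₀ • x) ∂lam = ∫⁻ g, f (g • x) ∂lam := by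
  simpa only [mul_smul] using lintegral_mul_right_eq_self (fun g => f (g • x)) g₀

variable [MeasurableSpace Z]

theorem measurable_measure_preimage_smul [MeasurableSMul₂ G Z] [SFinite lam] {B : Set Z}
    (hB : MeasurableSet B) : Measurable fun x : Z => lam ((· • x) ⁻¹' B) :=
  measurable_measure_prodMk_left ((measurable_snd.smul measurable_fst) hB)

theorem measurable_lintegral_comp_smul [MeasurableSMul₂ G Z] [SFinite lam] {f : Z → ℝ≥0∞}
    (hf : Measurable f) : Measurable fun x : Z => ∫⁻ g, f (g • x) ∂lam :=
  (hf.comp (measurable_snd.smul measurable_fst)).lintegral_prod_right'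

structure IsOrbitDisintegration (lam : Measure G) (m : Measure Z) (Xh : Set Z) (ν : Measure Z) :
    Prop where
  measure_compl : ν Xhᶜ = 0
  lintegral_eq : ∀ f : Z → ℝ≥0∞, Measurable f → ∫⁻ z, f z ∂m = ∫⁻ x, ∫⁻ g, f (g • x) ∂lam ∂ν

namespace IsOrbitDisintegration

variable {m ν : Measure Z} {Xh : Set Z} {r : Z → Z}

theorem ae_mem (hν : IsOrbitDisintegration lam m Xh ν) : ∀ᵐ x ∂ν, x ∈ Xh :=
  hν.measure_compl

theorem measure_eq [MeasurableSMul₂ G Z] (hν : IsOrbitDisintegration lam m Xh ν) {S : Set Z}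
    (hS : MeasurableSet S) : m S = ∫⁻ x, lam ((· • x) ⁻¹' S) ∂ν := by
  rw [← lintegral_indicator_one hS, hν.lintegral_eq _ (measurable_one.indicator hS)]
  refine lintegral_congr fun x => ?_
  rw [← lintegral_indicator_one (measurable_smul_const x hS)]
  rfl

theorem setLIntegral_measure_preimage_smul [MeasurableSMul₂ G Z]
    (hν : IsOrbitDisintegration lam m Xh ν) (hr_meas : Measurable r)
    (hr_fix : ∀ x ∈ Xh, ∀ g : G, r (g • x) = x) {A B : Set Z} (hA : MeasurableSet A)
    (hB : MeasurableSet B) : ∫⁻ x in A, lam ((· • x) ⁻¹' B) ∂ν = m (r ⁻¹' A ∩ B) := by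
  rw [hν.measure_eq ((hr_meas hA).inter hB), ← lintegral_indicator hA]
  refine lintegral_congr_ae ?_
  filter_upwards [hν.ae_mem] with x hx
  by_cases hxA : x ∈ A <;> simp [Set.preimage, hxA, hr_fix x hx]

theorem map_comp (hν : IsOrbitDisintegration lam m Xh ν) [MeasurableSMul₂ G Z] [SFinite lam]
    [MeasurableMul G] [lam.IsMulRightInvariant] (hXh : MeasurableSet Xh) (hr_meas : Measurable r)
    (hr : ∀ z : Z, r z ∈ Xh ∧ r z ∈ MulAction.orbit G z) {T : Z → Z} (hT_meas : Measurable T)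
    (hT_inv : m.map T = m) (hT_comm : ∀ (g : G) (z : Z), T (g • z) = g • T z) :
    IsOrbitDisintegration lam m Xh (ν.map (r ∘ T)) where
  measure_compl := by
    have hempty : r ∘ T ⁻¹' Xhᶜ = ∅ :=
      Set.eq_empty_of_forall_notMem fun x hx => hx (hr (T x)).1
    rw [Measure.map_apply (hr_meas.comp hT_meas) hXh.compl, hempty, measure_empty]
  lintegral_eq f hf := by
    have hrep : ∀ y, ∫⁻ g, f (g • r y) ∂lam = ∫⁻ g, f (g • y) ∂lam := fun y => by
      obtain ⟨g₀, hg₀⟩ := (hr y).2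
      rw [← hg₀, lintegral_comp_smul_smul]
    calc ∫⁻ z, f z ∂m = ∫⁻ z, f (T z) ∂m := by rw [← lintegral_map hf hT_meas, hT_inv]
      _ = ∫⁻ x, ∫⁻ g, f (T (g • x)) ∂lam ∂ν := hν.lintegral_eq _ (hf.comp hT_meas)
      _ = ∫⁻ x, ∫⁻ g, f (g • x) ∂lam ∂ν.map (r ∘ T) := by
        rw [lintegral_map (measurable_lintegral_comp_smul hf) (hr_meas.comp hT_meas)]
        simp only [Function.comp_apply, hT_comm, hrep]

theorem unique [MeasurableSMul₂ G Z] [SFinite lam] {ν₁ ν₂ : Measure Z}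
    (h₁ : IsOrbitDisintegration lam m Xh ν₁) (h₂ : IsOrbitDisintegration lam m Xh ν₂)
    (hr_meas : Measurable r) (hr_fix : ∀ x ∈ Xh, ∀ g : G, r (g • x) = x) {V : Set G}
    (hV : lam V ≠ 0) (E : ℕ → Set Z) (hE : ∀ n, m (V • E n) ≠ ∞) (hcover : Xh ⊆ ⋃ n, E n) :
    ν₁ = ν₂ := by
  set B : ℕ → Set Z := fun n => toMeasurable m (V • E n)
  have hB : ∀ n, MeasurableSet (B n) := fun n => measurableSet_toMeasurable m _
  have hset : ∀ {ν}, IsOrbitDisintegration lam m Xh ν → ∀ n A, MeasurableSet A →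
      ∫⁻ x in A, lam ((· • x) ⁻¹' B n) ∂ν = m (r ⁻¹' A ∩ B n) :=
    fun hν n _ hA => hν.setLIntegral_measure_preimage_smul hr_meas hr_fix hA (hB n)
  have hgood : ∀ {ν}, IsOrbitDisintegration lam m Xh ν →
      ∀ᵐ x ∂ν, ∃ n, lam ((· • x) ⁻¹' B n) ≠ 0 ∧ lam ((· • x) ⁻¹' B n) ≠ ∞ := by
    intro ν hν
    have hfin : ∀ n, ∀ᵐ x ∂ν, lam ((· • x) ⁻¹' B n) < ∞ := fun n =>
      ae_lt_top (measurable_measure_preimage_smul (hB n)) <| by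
        rw [← setLIntegral_univ, hset hν n _ MeasurableSet.univ, Set.preimage_univ,
          Set.univ_inter, measure_toMeasurable]
        exact hE n
    filter_upwards [hν.ae_mem, ae_all_iff.2 hfin] with x hx hxfin
    obtain ⟨n, hxn⟩ := Set.mem_iUnion.1 (hcover hx)
    have hVB : V ⊆ (· • x) ⁻¹' B n := fun g hg =>
      subset_toMeasurable m _ (Set.smul_mem_smul hg hxn)
    exact ⟨n, fun h0 => hV (measure_mono_null hVB h0), (hxfin n).ne⟩
  refine Measure.eq_of_withDensity_eq (fun n => measurable_measure_preimage_smul (hB n))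
    (fun n => ?_) (hgood h₁) (hgood h₂)
  ext A hA
  rw [withDensity_apply _ hA, withDensity_apply _ hA, hset h₁ n A hA, hset h₂ n A hA]

end IsOrbitDisintegration

end OrbitDisintegration

theorem disintegration_measure_invariant_of_commuting_action_general
    {G Z : Type*} [Group G] [TopologicalSpace G] [IsTopologicalGroup G]
    [LocallyCompactSpace G] [SecondCountableTopology G]
    [MeasurableSpace G] [BorelSpace G]
    (lam : Measure G) [lam.IsHaarMeasure] [lam.IsMulRightInvariant]
    [MeasurableSpace Z]
    [MulAction G Z] (hact : Measurable fun p : G × Z => p.1 • p.2)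
    (m : Measure Z)
    (Xh : Set Z) (hXh : MeasurableSet Xh)
    (hcross : ∀ z : Z, ∃! x : Z, x ∈ Xh ∧ x ∈ MulAction.orbit G z)
    (r : Z → Z) (hr_meas : Measurable r)
    (hr : ∀ z : Z, r z ∈ Xh ∧ r z ∈ MulAction.orbit G z)
    (V : Set G) (hV_nhd : V ∈ nhds (1 : G))
    (hsf : ∃ E : ℕ → Set Z, (∀ n, MeasurableSet (E n) ∧ m (V • E n) < ⊤) ∧ Xh ⊆ ⋃ n, E n)
    -- `ν` is the canonical measure on the cross section disintegrating `m`
    (ν : Measure Z) (hν_conc : ν Xhᶜ = 0)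
    (hν_disint : ∀ f : Z → ENNReal, Measurable f →
      ∫⁻ z, f z ∂m = ∫⁻ x, ∫⁻ g, f (g • x) ∂lam ∂ν)
    -- `H` acts measurably on `Z`, preserving `m` and commuting with the `G`-action
    {H : Type*} [Group H] [MulAction H Z]
    (hH_meas : ∀ h : H, Measurable fun z : Z => h • z)
    (hH_inv : ∀ h : H, Measure.map (fun z : Z => h • z) m = m)
    (hcomm : ∀ (g : G) (h : H) (z : Z), h • (g • z) = g • (h • z)) :
    ∀ h : H, Measure.map (fun x : Z => r (h • x)) ν = ν := by
  intro h
  have : MeasurableSMul₂ G Z := ⟨hact⟩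
  have hν : IsOrbitDisintegration lam m Xh ν := ⟨hν_conc, hν_disint⟩
  obtain ⟨E, hE, hcover⟩ := hsf
  exact (hν.map_comp hXh hr_meas hr (hH_meas h) (hH_inv h) fun g z => hcomm g h z).unique
    hν hr_meas (fun x hx g => rep_smul_eq_self hcross hr hx g)
    (lam.measure_pos_of_mem_nhds hV_nhd).ne' E (fun n => (hE n).2.ne) hcover

/-- If `G` is unimodular and a group `H` acts measurably on `Z`, preserving `m` and
commuting with the `G`-action, then the induced `H`-action `x ↦ r(h • x)` on the
cross section preserves the canonical disintegration measure `ν`. -/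
theorem disintegration_measure_invariant_of_commuting_action
    {G Z : Type*} [Group G] [TopologicalSpace G] [IsTopologicalGroup G]
    [LocallyCompactSpace G] [SecondCountableTopology G]
    [MeasurableSpace G] [BorelSpace G]
    (lam : Measure G) [lam.IsHaarMeasure] [lam.IsMulRightInvariant]
    [MeasurableSpace Z] [StandardBorelSpace Z]
    [MulAction G Z] (hact : Measurable fun p : G × Z => p.1 • p.2)
    (m : Measure Z) [SigmaFinite m]
    (hinv : ∀ g : G, Measure.map (fun z : Z => g • z) m = m)
    (hstab : ∀ z : Z, IsCompact {g : G | g • z = z})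
    (Xh : Set Z) (hXh : MeasurableSet Xh)
    (hcross : ∀ z : Z, ∃! x : Z, x ∈ Xh ∧ x ∈ MulAction.orbit G z)
    (r : Z → Z) (hr_meas : Measurable r)
    (hr : ∀ z : Z, r z ∈ Xh ∧ r z ∈ MulAction.orbit G z)
    (V : Set G) (hV_cpt : IsCompact V) (hV_nhd : V ∈ nhds (1 : G))
    (hsf : ∃ E : ℕ → Set Z, (∀ n, MeasurableSet (E n) ∧ m (V • E n) < ⊤) ∧ Xh ⊆ ⋃ n, E n)
    -- `ν` is the canonical measure on the cross section disintegrating `m`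
    (ν : Measure Z) (hν_conc : ν Xhᶜ = 0) (hν_sf : SigmaFinite ν)
    (hν_disint : ∀ f : Z → ENNReal, Measurable f →
      ∫⁻ z, f z ∂m = ∫⁻ x, ∫⁻ g, f (g • x) ∂lam ∂ν)
    -- `H` acts measurably on `Z`, preserving `m` and commuting with the `G`-action
    {H : Type*} [Group H] [MulAction H Z]
    (hH_meas : ∀ h : H, Measurable fun z : Z => h • z)
    (hH_inv : ∀ h : H, Measure.map (fun z : Z => h • z) m = m)
    (hcomm : ∀ (g : G) (h : H) (z : Z), h • (g • z) = g • (h • z)) :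
    ∀ h : H, Measure.map (fun x : Z => r (h • x)) ν = ν :=
  disintegration_measure_invariant_of_commuting_action_general lam hact m Xh hXh hcross r hr_meas hr
    V hV_nhd hsf ν hν_conc hν_disint hH_meas hH_inv hcomm
end
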